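/- Correctness of the secure array access protocol: let a be an array of length m over a commutative ring, indexed by Z_m, and let rot_r denote cyclic rotation by r positions (rot_r(a)[j] = a[(j − r) mod m]). Given shares ⟨a⟩₁ + ⟨a⟩₂ = a (pointwise), masks c¹ + c² + c³ = 0 (pointwise), and rotation offsets r¹, r³ ∈ Z_m, define a''₂ = rot_{r³}(rot_{r¹}(⟨a⟩₁) + c¹) and a''₃ = rot_{r³}(rot_{r¹}(⟨a⟩₂) + c² + c³). Then for any index I ∈ Z_m, with h = I + r¹ + r³ mod m, we have a''₂[h] + a''₃[h] = a[I]. -/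

import Mathlib

/-! The rotation offsets compose and rotation is additive, so the sum of the two re-randomised
shares is the rotation of `a` by `r¹ + r³` plus the rotation of the mask sum `c¹ + c² + c³ = 0`;
reading it at `I + r¹ + r³` undoes the rotation. -/

section Rotation

variable {G M : Type*} [AddCommGroup G]

def rotate (r : G) (f : G → M) : G → M := fun j => f (j - r)

@[simp]
theorem rotate_apply_add (r i : G) (f : G → M) : rotate r f (i + r) = f i := by
  simp only [rotate, add_sub_cancel_right]

theorem rotate_add [Add M] (r : G) (f g : G → M) :
    rotate r (f + g) = rotate r f + rotate r g := rfl

theorem rotate_rotate (r s : G) (f : G → M) : rotate s (rotate r f) = rotate (r + s) f := by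
  funext j
  simp only [rotate, sub_sub, add_comm s r]

end Rotation

theorem rotate_shares_add_masks {G M : Type*} [AddCommGroup G] [AddCommGroup M]
    (r s : G) {a a₁ a₂ c₁ c₂ c₃ : G → M} (hshare : a₁ + a₂ = a) (hmask : c₁ + c₂ + c₃ = 0) :
    rotate s (rotate r a₁ + c₁) + rotate s (rotate r a₂ + c₂ + c₃) = rotate (r + s) a := by
  calc rotate s (rotate r a₁ + c₁) + rotate s (rotate r a₂ + c₂ + c₃)
      = rotate s (rotate r (a₁ + a₂) + (c₁ + c₂ + c₃)) := by
        simp only [rotate_add]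
        abel
    _ = rotate (r + s) a := by rw [hshare, hmask, add_zero, rotate_rotate]

theorem stmt_4_general {R : Type*} [CommRing R] {m : ℕ}
    (a a1 a2 c1 c2 c3 : ZMod m → R) (r1 r3 I : ZMod m)
    (hshare : ∀ j, a1 j + a2 j = a j)
    (hmask : ∀ j, c1 j + c2 j + c3 j = 0)
    (a''2 a''3 : ZMod m → R)
    (ha2 : ∀ j, a''2 j = (fun i => a1 (i - r1)) (j - r3) + c1 (j - r3))
    (ha3 : ∀ j, a''3 j = (fun i => a2 (i - r1)) (j - r3) + c2 (j - r3) + c3 (j - r3)) :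
    a''2 (I + r1 + r3) + a''3 (I + r1 + r3) = a I := by
  have h2 : a''2 = rotate r3 (rotate r1 a1 + c1) := funext ha2
  have h3 : a''3 = rotate r3 (rotate r1 a2 + c2 + c3) := funext ha3
  have hsum := rotate_shares_add_masks r1 r3 (funext hshare) (funext hmask)
  rw [h2, h3, add_assoc, ← Pi.add_apply, hsum, rotate_apply_add]

theorem stmt_4 {R : Type*} [CommRing R] {m : ℕ} [NeZero m]
    (a a1 a2 c1 c2 c3 : ZMod m → R) (r1 r3 I : ZMod m)
    (hshare : ∀ j, a1 j + a2 j = a j)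
    (hmask : ∀ j, c1 j + c2 j + c3 j = 0)
    (a''2 a''3 : ZMod m → R)
    (ha2 : ∀ j, a''2 j = (fun i => a1 (i - r1)) (j - r3) + c1 (j - r3))
    (ha3 : ∀ j, a''3 j = (fun i => a2 (i - r1)) (j - r3) + c2 (j - r3) + c3 (j - r3)) :
    a''2 (I + r1 + r3) + a''3 (I + r1 + r3) = a I :=
  stmt_4_general a a1 a2 c1 c2 c3 r1 r3 I hshare hmask a''2 a''3 ha2 ha3
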